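/- arXiv:1604.05902 — 4 statements merged into one kernel-verified Lean document; each statement's English description precedes it below -/
import Mathlib

section
/- Let G be a finite non-abelian group that is 5-centralizer, i.e., the set {C_G(x) : x ∈ G} of centralizers of elements of G has exactly 5 members. Then G is commuting integral, i.e., every eigenvalue of the adjacency matrix of the commuting graph Γ_G (over the reals) is an integer. -/
/-! In a 5-centralizer group, elements `a, b` commuting with a common non-central element `x`
commute. Otherwise, for non-commuting `u, v ∈ C(x)` the five distinct subgroups
`G, C(x), C(u), C(v), C(uv)` are all the centralizers; since `C(xu)` contains `u` but not `v`,
it must be `C(u)`, whence `C(u) = C(u) ⊓ C(xu) ≤ C(x)`. Applied to `(u, v) = (a, b), (b, a),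
(ab, a)` this puts every centralizer other than `G` inside `C(x)`, so `x` is central.

Hence the commuting graph is a disjoint union of cliques. If `A v = μ v` for such a graph, the
sum of `v` over the closed neighbourhood of `p` is `(μ + 1) v p`, and it is constant on the
clique of `p`; summing it over that clique gives `(deg p + 1) (μ + 1) v p = (μ + 1)² v p`, so
`μ = -1` or `μ = deg p`. -/

open Polynomial

/-- The commuting graph of a group `G`: vertices are the non-central elements,
two distinct vertices are adjacent iff they commute. -/
def commutingGraph (G : Type*) [Group G] : SimpleGraph {x : G // x ∉ Subgroup.center G} where
  Adj x y := x ≠ y ∧ (x : G) * y = (y : G) * x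
  symm := by constructor; rintro x y ⟨hne, hc⟩; exact ⟨hne.symm, hc.symm⟩
  loopless := by constructor; rintro x ⟨hne, _⟩; exact hne rfl

open scoped Classical in
/-- The characteristic polynomial (over `ℝ`) of the adjacency matrix of the
commuting graph of `G`. -/
noncomputable def commCharpoly (G : Type*) [Group G] [Fintype G] : Polynomial ℝ :=
  ((commutingGraph G).adjMatrix ℝ).charpoly

namespace SimpleGraph

open scoped Matrix

def IsClusterGraph {V : Type*} (H : SimpleGraph V) : Prop :=
  ∀ ⦃p q r⦄, H.Adj p q → H.Adj q r → p ≠ r → H.Adj p r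

variable {V : Type*} [Fintype V] [DecidableEq V] (H : SimpleGraph V) [DecidableRel H.Adj]

def closedNeighborFinset (p : V) : Finset V := insert p (H.neighborFinset p)

variable {H}

lemma mem_closedNeighborFinset {p q : V} :
    q ∈ H.closedNeighborFinset p ↔ p = q ∨ H.Adj p q := by
  simp [closedNeighborFinset, eq_comm]

lemma card_closedNeighborFinset (p : V) : (H.closedNeighborFinset p).card = H.degree p + 1 :=
  Finset.card_insert_of_notMem (H.notMem_neighborFinset_self p)

lemma closedNeighborFinset_subset_of_adj (hH : H.IsClusterGraph) {p q : V} (hpq : H.Adj p q) :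
    H.closedNeighborFinset p ⊆ H.closedNeighborFinset q := by
  intro r hr
  rw [mem_closedNeighborFinset] at hr ⊢
  rcases hr with rfl | hpr
  · exact .inr hpq.symm
  · by_cases hqr : q = r
    · exact .inl hqr
    · exact .inr (hH hpq.symm hpr hqr)

lemma closedNeighborFinset_eq_of_adj (hH : H.IsClusterGraph) {p q : V} (hpq : H.Adj p q) :
    H.closedNeighborFinset p = H.closedNeighborFinset q :=
  (closedNeighborFinset_subset_of_adj hH hpq).antisymm
    (closedNeighborFinset_subset_of_adj hH hpq.symm)

lemma eq_neg_one_or_eq_degree_of_adjMatrix_mulVec_eq_smul (hH : H.IsClusterGraph) {μ : ℝ}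
    {v : V → ℝ} (hv : H.adjMatrix ℝ *ᵥ v = μ • v) {p : V} (hp : v p ≠ 0) :
    μ = -1 ∨ μ = H.degree p := by
  set S : V → ℝ := fun q ↦ ∑ r ∈ H.closedNeighborFinset q, v r
  have hS : ∀ q, S q = (μ + 1) * v q := fun q ↦ by
    have hq := congrFun hv q
    rw [adjMatrix_mulVec_apply, Pi.smul_apply, smul_eq_mul] at hq
    simp only [S, closedNeighborFinset, Finset.sum_insert (H.notMem_neighborFinset_self q), hq]
    ring
  have hS_const : ∀ q ∈ H.closedNeighborFinset p, S q = S p := fun q hq ↦ by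
    rcases mem_closedNeighborFinset.1 hq with rfl | hpq
    · rfl
    · simp only [S, closedNeighborFinset_eq_of_adj hH hpq]
  have hcount : (H.degree p + 1 : ℝ) * S p = (μ + 1) * S p :=
    calc (H.degree p + 1 : ℝ) * S p = ∑ q ∈ H.closedNeighborFinset p, S q := by
          rw [Finset.sum_congr rfl hS_const, Finset.sum_const, card_closedNeighborFinset,
            nsmul_eq_mul]
          push_cast
          rfl
      _ = (μ + 1) * S p := by simp only [hS, ← Finset.mul_sum, S]
  rcases eq_or_ne (μ + 1) 0 with hμ | hμ
  · exact .inl (by linarith)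
  · have hSp : S p ≠ 0 := by rw [hS]; exact mul_ne_zero hμ hp
    exact .inr (by linarith [mul_right_cancel₀ hSp hcount])

lemma exists_int_eq_of_isRoot_charpoly_adjMatrix (hH : H.IsClusterGraph) {μ : ℝ}
    (hμ : (H.adjMatrix ℝ).charpoly.IsRoot μ) : ∃ k : ℤ, μ = k := by
  rw [← Matrix.charpoly_toLin', ← Module.End.hasEigenvalue_iff_isRoot_charpoly] at hμ
  obtain ⟨v, hv⟩ := hμ.exists_hasEigenvector
  obtain ⟨p, hp : v p ≠ 0⟩ := Function.ne_iff.1 hv.2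
  rcases eq_neg_one_or_eq_degree_of_adjMatrix_mulVec_eq_smul hH
    (by simpa using hv.apply_eq_smul) hp with h | h
  exacts [⟨-1, by simp [h]⟩, ⟨H.degree p, by simp [h]⟩]

end SimpleGraph

section FiveCentralizers

open Subgroup

variable {G : Type*} [Group G]

lemma mem_centralizer_singleton_iff_commute {g k : G} : k ∈ centralizer {g} ↔ Commute k g :=
  mem_centralizer_singleton_iff

lemma Commute.of_mul_right_left {g x u : G} (hu : Commute g u) (h : Commute g (x * u)) :
    Commute g x := by
  simpa using h.mul_right hu.inv_right

lemma Commute.of_mul_right_right {g x u : G} (hx : Commute g x) (h : Commute g (x * u)) :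
    Commute g u := by
  simpa using hx.inv_right.mul_right h

lemma notMem_centralizer_singleton_mul_left {u v : G} (huv : ¬Commute u v) :
    u ∉ centralizer {u * v} := fun h ↦
  huv ((Commute.refl u).of_mul_right_right (mem_centralizer_singleton_iff_commute.1 h))

lemma notMem_centralizer_singleton_mul_right {u v : G} (huv : ¬Commute u v) :
    v ∉ centralizer {u * v} := fun h ↦
  huv ((Commute.refl v).of_mul_right_left (mem_centralizer_singleton_iff_commute.1 h)).symm

lemma range_centralizer_eq_of_card_eq_five
    (h5 : Nat.card (Set.range fun g : G ↦ centralizer ({g} : Set G)) = 5)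
    {x u v : G} (hx : x ∉ center G) (hu : Commute x u) (hv : Commute x v)
    (huv : ¬Commute u v) :
    Set.range (fun g : G ↦ centralizer ({g} : Set G)) =
      {⊤, centralizer {x}, centralizer {u}, centralizer {v}, centralizer {u * v}} := by
  have hx_top : centralizer {x} ≠ ⊤ := by
    rwa [Ne, centralizer_eq_top_iff_subset, Set.singleton_subset_iff]
  have hu_v : u ∉ centralizer {v} := mt mem_centralizer_singleton_iff_commute.1 huv
  have hv_u : v ∉ centralizer {u} := fun h ↦ huv (mem_centralizer_singleton_iff_commute.1 h).symm
  have hu_uv := notMem_centralizer_singleton_mul_left huv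
  have hv_uv := notMem_centralizer_singleton_mul_right huv
  have hu_x : u ∈ centralizer {x} := mem_centralizer_singleton_iff_commute.2 hu.symm
  have hv_x : v ∈ centralizer {x} := mem_centralizer_singleton_iff_commute.2 hv.symm
  have hself : ∀ g : G, g ∈ centralizer {g} := fun g ↦
    mem_centralizer_singleton_iff_commute.2 (Commute.refl g)
  have : Finite (Set.range fun g : G ↦ centralizer ({g} : Set G)) :=
    Nat.finite_of_card_ne_zero (by rw [h5]; norm_num)
  refine (Set.eq_of_subset_of_ncard_le ?_ ?_ (Set.toFinite _)).symm
  · rintro _ (rfl | rfl | rfl | rfl | rfl)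
    exacts [⟨1, by simp⟩, ⟨x, rfl⟩, ⟨u, rfl⟩, ⟨v, rfl⟩, ⟨u * v, rfl⟩]
  · rw [← Nat.card_coe_set_eq, h5, Set.ncard_insert_of_notMem, Set.ncard_insert_of_notMem,
      Set.ncard_insert_of_notMem, Set.ncard_insert_of_notMem, Set.ncard_singleton]
    all_goals simp only [Set.mem_insert_iff, Set.mem_singleton_iff, not_or]
    exacts [ne_of_mem_of_not_mem' (hself v) hv_uv,
      ⟨ne_of_mem_of_not_mem' (hself u) hu_v, ne_of_mem_of_not_mem' (hself u) hu_uv⟩,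
      ⟨ne_of_mem_of_not_mem' hv_x hv_u, ne_of_mem_of_not_mem' hu_x hu_v,
        ne_of_mem_of_not_mem' hu_x hu_uv⟩,
      ⟨hx_top.symm, ne_of_mem_of_not_mem' (mem_top v) hv_u,
        ne_of_mem_of_not_mem' (mem_top u) hu_v, ne_of_mem_of_not_mem' (mem_top u) hu_uv⟩]

lemma centralizer_le_of_card_range_centralizer_eq_five
    (h5 : Nat.card (Set.range fun g : G ↦ centralizer ({g} : Set G)) = 5)
    {x u v : G} (hx : x ∉ center G) (hu : Commute x u) (hv : Commute x v)
    (huv : ¬Commute u v) : centralizer {u} ≤ centralizer {x} := by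
  have hu_xu : u ∈ centralizer {x * u} :=
    mem_centralizer_singleton_iff_commute.2 (hu.symm.mul_right (Commute.refl u))
  have hv_xu : v ∉ centralizer {x * u} := fun h ↦
    huv (hv.symm.of_mul_right_right (mem_centralizer_singleton_iff_commute.1 h)).symm
  have hxu : centralizer {x * u} = centralizer {u} := by
    have hmem : centralizer {x * u} ∈ Set.range fun g : G ↦ centralizer ({g} : Set G) :=
      ⟨x * u, rfl⟩
    rw [range_centralizer_eq_of_card_eq_five h5 hx hu hv huv] at hmem
    rcases hmem with h | h | h | h | h
    · exact absurd (h ▸ mem_top v) hv_xu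
    · exact absurd (h ▸ mem_centralizer_singleton_iff_commute.2 hv.symm) hv_xu
    · exact h
    · exact absurd (mem_centralizer_singleton_iff_commute.1 (h ▸ hu_xu)) huv
    · exact absurd (h ▸ hu_xu) (notMem_centralizer_singleton_mul_left huv)
  intro g hg
  have hg_xu : g ∈ centralizer {x * u} := hxu ▸ hg
  rw [mem_centralizer_singleton_iff_commute] at hg hg_xu ⊢
  exact hg.of_mul_right_left hg_xu

theorem commute_of_card_range_centralizer_eq_five
    (h5 : Nat.card (Set.range fun g : G ↦ centralizer ({g} : Set G)) = 5)
    {x a b : G} (hx : x ∉ center G) (ha : Commute x a) (hb : Commute x b) : Commute a b := by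
  by_contra hab
  have hle : ∀ K ∈ ({centralizer {x}, centralizer {a}, centralizer {b}, centralizer {a * b}} :
      Set (Subgroup G)), K ≤ centralizer {x} := by
    rintro _ (rfl | rfl | rfl | rfl)
    · exact le_rfl
    · exact centralizer_le_of_card_range_centralizer_eq_five h5 hx ha hb hab
    · exact centralizer_le_of_card_range_centralizer_eq_five h5 hx hb ha (hab ·.symm)
    · refine centralizer_le_of_card_range_centralizer_eq_five h5 hx (ha.mul_right hb) ha ?_
      exact fun h ↦ notMem_centralizer_singleton_mul_left hab
        (mem_centralizer_singleton_iff_commute.2 h.symm)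
  refine hx (mem_center_iff.2 fun g ↦ ?_)
  have hg : centralizer {g} ∈ Set.range fun g : G ↦ centralizer ({g} : Set G) := ⟨g, rfl⟩
  rw [range_centralizer_eq_of_card_eq_five h5 hx ha hb hab] at hg
  have hself : g ∈ centralizer {g} := mem_centralizer_singleton_iff_commute.2 (Commute.refl g)
  rcases hg with htop | hg
  · exact (mem_centralizer_singleton_iff_commute.1 (htop ▸ mem_top x)).symm
  · exact mem_centralizer_singleton_iff_commute.1 (hle _ hg hself)

end FiveCentralizers

theorem commuting_integral_of_five_centralizer_general
    (G : Type*) [Group G] [Fintype G]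
    (h5 : Nat.card (Set.range fun x : G => Subgroup.centralizer ({x} : Set G)) = 5) :
    ∀ μ : ℝ, (commCharpoly G).IsRoot μ → ∃ k : ℤ, μ = (k : ℝ) := by
  classical
  intro μ hμ
  refine (commutingGraph G).exists_int_eq_of_isRoot_charpoly_adjMatrix ?_ hμ
  rintro p q r ⟨-, hpq⟩ ⟨-, hqr⟩ hpr
  exact ⟨hpr, commute_of_card_range_centralizer_eq_five h5 q.2 hpq.symm hqr⟩

theorem commuting_integral_of_five_centralizer
    (G : Type*) [Group G] [Fintype G]
    (hna : ∃ a b : G, a * b ≠ b * a)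
    (h5 : Nat.card (Set.range fun x : G => Subgroup.centralizer ({x} : Set G)) = 5) :
    ∀ μ : ℝ, (commCharpoly G).IsRoot μ → ∃ k : ℤ, μ = (k : ℝ) :=
  commuting_integral_of_five_centralizer_general G h5
end

section
/- Let G be a finite non-abelian group and let {x₁, …, x_r} be a set of pairwise non-commuting elements of G of maximal size among all sets of pairwise non-commuting elements of G. If r = 3 or r = 4, then G is commuting integral, i.e., every eigenvalue of the adjacency matrix of the commuting graph Γ_G (over the reals) is an integer. -/
/-!
If no five elements of `G` pairwise fail to commute, the centralizer `C(y)` of every non-central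
`y` is abelian. Let `p, q ∈ C(y)` not commute and let `w ∉ C(y)`. If `w` commutes with neither `p`
nor `q`, it commutes with `pq`, since otherwise `{p, q, pq, w, wy}` are five pairwise
non-commuting elements; and `w` cannot commute with both, since otherwise `{p, q, pqy, pqw, pqyw}`
are. Applying the first fact to `(p, q)`, `(yp, q)`, `(p, yq)` and then the second to `(yp, yq)`
rules out that `w` commutes with neither, and replacing `p` by `py` when `w` commutes with `p`
reduces to that case. So commuting is transitive on non-central elements: the commuting graph is
a disjoint union of cliques, with adjacency eigenvalues `-1` and `|K| - 1` for its cliques `K`.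
-/

open Polynomial

open scoped Matrix

theorem List.pairwise_five_iff {α : Type*} {R : α → α → Prop} {a b c d e : α} :
    [a, b, c, d, e].Pairwise R ↔
      (R a b ∧ R a c ∧ R a d ∧ R a e) ∧ (R b c ∧ R b d ∧ R b e) ∧ (R c d ∧ R c e) ∧ R d e := by
  simp only [List.pairwise_cons, List.mem_cons, List.not_mem_nil, forall_eq_or_imp,
    List.Pairwise.nil, false_imp_iff, implies_true, and_true]

section Commute

variable {G : Type*} [Group G] {a b c : G}

theorem Commute.mul_right_iff_of_right (hc : Commute a c) :
    Commute a (b * c) ↔ Commute a b :=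
  ⟨fun h => by simpa using h.mul_right hc.inv_right, fun h => h.mul_right hc⟩

theorem Commute.mul_right_iff_of_left (hb : Commute a b) :
    Commute a (b * c) ↔ Commute a c :=
  ⟨fun h => by simpa using hb.inv_right.mul_right h, hb.mul_right⟩

end Commute

/-- `ω(G) ≤ n`, for the non-commuting number `ω(G)`: the largest size of a set of pairwise
non-commuting elements. -/
def NoncommutingNumberLE (G : Type*) [Group G] (n : ℕ) : Prop :=
  ∀ T : Finset G, (T : Set G).Pairwise (fun x y => ¬Commute x y) → T.card ≤ n

namespace NoncommutingNumberLE

variable {G : Type*} [Group G]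

theorem length_le {n : ℕ} (h : NoncommutingNumberLE G n) {l : List G}
    (hl : l.Pairwise fun x y => ¬Commute x y) : l.length ≤ n := by
  classical
  have : Std.Symm fun x y : G => ¬Commute x y := ⟨fun _ _ h hc => h hc.symm⟩
  have hnodup : l.Nodup := hl.imp fun hxy heq => hxy (by rw [heq])
  rw [← List.toFinset_card_of_nodup hnodup]
  exact h _ (by simpa using hl.set_pairwise)

variable {y p q w : G}

theorem commute_mul (h : NoncommutingNumberLE G 4) (hp : Commute p y) (hq : Commute q y)
    (hpq : ¬Commute p q) (hwy : ¬Commute w y) (hwp : ¬Commute w p) (hwq : ¬Commute w q) :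
    Commute w (p * q) := by
  by_contra hwpq
  have := h.length_le (l := [p, q, p * q, w, w * y]) <| List.pairwise_five_iff.2
    ⟨⟨hpq, by rwa [(Commute.refl p).mul_right_iff_of_left], mt Commute.symm hwp,
        by rwa [hp.mul_right_iff_of_right, Commute.symm_iff]⟩,
      ⟨by rwa [(Commute.refl q).mul_right_iff_of_right, Commute.symm_iff], mt Commute.symm hwq,
        by rwa [hq.mul_right_iff_of_right, Commute.symm_iff]⟩,
      ⟨mt Commute.symm hwpq,
        by rwa [(hp.mul_left hq).mul_right_iff_of_right, Commute.symm_iff]⟩,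
      by rwa [(Commute.refl w).mul_right_iff_of_left]⟩
  simp at this

theorem commute_of_commute_of_commute (h : NoncommutingNumberLE G 4) (hp : Commute p y)
    (hq : Commute q y) (hpq : ¬Commute p q) (hwp : Commute w p) (hwq : Commute w q) :
    Commute w y := by
  by_contra hwy
  have hpqy : Commute (p * q) y := hp.mul_left hq
  have hwpq : Commute w (p * q) := hwp.mul_right hwq
  have hp_pq : ¬Commute p (p * q) := by rwa [(Commute.refl p).mul_right_iff_of_left]
  have hq_pq : ¬Commute q (p * q) := by
    rwa [(Commute.refl q).mul_right_iff_of_right, Commute.symm_iff]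
  have hpqy_pqw : ¬Commute (p * q * y) (p * q * w) := by
    rwa [((Commute.refl _).mul_left hpqy.symm).mul_right_iff_of_left, Commute.symm_iff,
      hwpq.mul_right_iff_of_left]
  have := h.length_le (l := [p, q, p * q * y, p * q * w, p * q * y * w]) <|
    List.pairwise_five_iff.2
    ⟨⟨hpq, by rwa [hp.mul_right_iff_of_right], by rwa [hwp.symm.mul_right_iff_of_right],
        by rwa [hwp.symm.mul_right_iff_of_right, hp.mul_right_iff_of_right]⟩,
      ⟨by rwa [hq.mul_right_iff_of_right], by rwa [hwq.symm.mul_right_iff_of_right],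
        by rwa [hwq.symm.mul_right_iff_of_right, hq.mul_right_iff_of_right]⟩,
      ⟨hpqy_pqw, by rwa [(Commute.refl _).mul_right_iff_of_left, Commute.symm_iff,
        hwpq.mul_right_iff_of_left]⟩,
      by rwa [hwpq.symm.mul_left (Commute.refl w) |>.mul_right_iff_of_right, Commute.symm_iff]⟩
  simp at this

theorem commute_of_not_commute_of_not_commute (h : NoncommutingNumberLE G 4) {u v : G}
    (hu : Commute u y) (hv : Commute v y) (huv : ¬Commute u v) (hwu : ¬Commute w u)
    (hwv : ¬Commute w v) : Commute w y := by
  by_contra hwy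
  have hyu : Commute (y * u) y := (Commute.refl y).mul_left hu
  have hyv : Commute (y * v) y := (Commute.refl y).mul_left hv
  have hw_uv : Commute w (u * v) := h.commute_mul hu hv huv hwy hwu hwv
  have hw_yuv : ¬Commute w (y * (u * v)) := by rwa [hw_uv.mul_right_iff_of_right]
  have hw_yu : Commute w (y * u) := by
    by_contra hw_yu
    refine hw_yuv (mul_assoc y u v ▸ h.commute_mul hyu hv ?_ hwy hw_yu hwv)
    rwa [Commute.symm_iff, hv.mul_right_iff_of_left, Commute.symm_iff]
  have hw_yv : Commute w (y * v) := by
    by_contra hw_yv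
    refine hw_yuv (hu.left_comm v ▸ h.commute_mul hu hyv ?_ hwy hwu hw_yv)
    rwa [hu.mul_right_iff_of_left]
  refine hwy (h.commute_of_commute_of_commute hyu hyv ?_ hw_yu hw_yv)
  rwa [hyu.mul_right_iff_of_left, Commute.symm_iff, hv.mul_right_iff_of_left,
    Commute.symm_iff]

theorem commute_of_not_mem_center (h : NoncommutingNumberLE G 4)
    (hy : y ∉ Subgroup.center G) (hp : Commute p y) (hq : Commute q y) : Commute p q := by
  obtain ⟨w, hwy⟩ : ∃ w, ¬Commute w y := not_forall.mp (Subgroup.mem_center_iff.not.mp hy)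
  -- if `w` commutes with `a ∈ C(y)` then not with `a * y`, which commutes with the same `b ∈ C(y)`
  have twist : ∀ a, Commute a y → ∃ a', Commute a' y ∧ ¬Commute w a' ∧
      ∀ b, Commute b y → (Commute b a' ↔ Commute b a) := by
    intro a ha
    by_cases hwa : Commute w a
    · exact ⟨a * y, ha.mul_left (.refl y), fun h' => hwy (hwa.mul_right_iff_of_left.1 h'),
        fun b hb => hb.mul_right_iff_of_right⟩
    · exact ⟨a, ha, hwa, fun _ _ => Iff.rfl⟩
  obtain ⟨u, hu, hwu, hu_iff⟩ := twist p hp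
  obtain ⟨v, hv, hwv, hv_iff⟩ := twist q hq
  by_contra hpq
  refine hwy (h.commute_of_not_commute_of_not_commute hu hv ?_ hwu hwv)
  rwa [hv_iff u hu, Commute.symm_iff, hu_iff q hq, Commute.symm_iff]

end NoncommutingNumberLE

theorem commutingGraph_adj_trans {G : Type*} [Group G] (h : NoncommutingNumberLE G 4)
    ⦃a b c : {x : G // x ∉ Subgroup.center G}⦄ (hab : (commutingGraph G).Adj a b)
    (hbc : (commutingGraph G).Adj b c) (hac : a ≠ c) : (commutingGraph G).Adj a c :=
  ⟨hac, h.commute_of_not_mem_center b.2 hab.2 hbc.2.symm⟩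

theorem Matrix.exists_mulVec_eq_smul_of_isRoot_charpoly {n K : Type*} [Fintype n]
    [DecidableEq n] [Field K] {A : Matrix n n K} {μ : K} (hμ : A.charpoly.IsRoot μ) :
    ∃ v ≠ 0, A *ᵥ v = μ • v := by
  obtain ⟨v, hv, hAv⟩ := Matrix.exists_mulVec_eq_zero_iff.mpr (A.eval_charpoly μ ▸ hμ.eq_zero)
  refine ⟨v, hv, ?_⟩
  rw [Matrix.sub_mulVec, sub_eq_zero] at hAv
  rw [← hAv]
  ext i
  simp

namespace SimpleGraph

variable {V : Type*} [Fintype V] [DecidableEq V] {Γ : SimpleGraph V} [DecidableRel Γ.Adj]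

theorem neighborFinset_eq_erase_insert
    (htrans : ∀ ⦃a b c⦄, Γ.Adj a b → Γ.Adj b c → a ≠ c → Γ.Adj a c) {x u : V}
    (hu : u ∈ insert x (Γ.neighborFinset x)) :
    Γ.neighborFinset u = (insert x (Γ.neighborFinset x)).erase u := by
  ext z
  simp only [mem_neighborFinset, Finset.mem_erase, Finset.mem_insert] at hu ⊢
  rcases hu with rfl | hxu
  · grind [Adj.ne]
  · grind [Adj.ne, Adj.symm]

theorem exists_int_eq_of_isRoot_charpoly_adjMatrix_s10
    (htrans : ∀ ⦃a b c⦄, Γ.Adj a b → Γ.Adj b c → a ≠ c → Γ.Adj a c) {μ : ℝ}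
    (hμ : (Γ.adjMatrix ℝ).charpoly.IsRoot μ) : ∃ k : ℤ, μ = k := by
  obtain ⟨v, hv0, hAv⟩ := Matrix.exists_mulVec_eq_smul_of_isRoot_charpoly hμ
  obtain ⟨x, hx⟩ := Function.ne_iff.mp hv0
  by_cases hμ1 : μ = -1
  · exact ⟨-1, by simp [hμ1]⟩
  set K := insert x (Γ.neighborFinset x)
  have hxK : x ∈ K := Finset.mem_insert_self _ _
  have hK : ∀ u ∈ K, (μ + 1) * v u = ∑ z ∈ K, v z := by
    intro u hu
    have hAvu := congrFun hAv u
    rw [adjMatrix_mulVec_apply, neighborFinset_eq_erase_insert htrans hu,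
      Finset.sum_erase_eq_sub hu, Pi.smul_apply, smul_eq_mul] at hAvu
    linarith
  have hμ1' : μ + 1 ≠ 0 := fun h => hμ1 (by linarith)
  have hconst : ∀ u ∈ K, v u = v x := fun u hu =>
    mul_left_cancel₀ hμ1' (by rw [hK u hu, hK x hxK])
  have hcard : (μ + 1) * v x = K.card * v x := by
    rw [hK x hxK, Finset.sum_congr rfl hconst, Finset.sum_const, nsmul_eq_mul]
  refine ⟨K.card - 1, ?_⟩
  push_cast
  linarith [mul_right_cancel₀ hx hcard]

end SimpleGraph

theorem commuting_integral_of_max_noncommuting_set_three_or_four_general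
    (G : Type*) [Group G] [Fintype G]
    (S : Finset G) (r : ℕ)
    (hmax : ∀ T : Finset G, (∀ x ∈ T, ∀ y ∈ T, x ≠ y → x * y ≠ y * x) → T.card ≤ S.card)
    (hr : S.card = r) (hr34 : r = 3 ∨ r = 4) :
    ∀ μ : ℝ, (commCharpoly G).IsRoot μ → ∃ k : ℤ, μ = (k : ℝ) := by
  have h4 : NoncommutingNumberLE G 4 := fun T hT => (hmax T hT).trans (by omega)
  intro μ hμ
  classical
  exact SimpleGraph.exists_int_eq_of_isRoot_charpoly_adjMatrix_s10 (commutingGraph_adj_trans h4) hμ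

theorem commuting_integral_of_max_noncommuting_set_three_or_four
    (G : Type*) [Group G] [Fintype G]
    (hna : ∃ a b : G, a * b ≠ b * a)
    (S : Finset G) (r : ℕ)
    (hS : ∀ x ∈ S, ∀ y ∈ S, x ≠ y → x * y ≠ y * x)
    (hmax : ∀ T : Finset G, (∀ x ∈ T, ∀ y ∈ T, x ≠ y → x * y ≠ y * x) → T.card ≤ S.card)
    (hr : S.card = r) (hr34 : r = 3 ∨ r = 4) :
    ∀ μ : ℝ, (commCharpoly G).IsRoot μ → ∃ k : ℤ, μ = (k : ℝ) :=
  commuting_integral_of_max_noncommuting_set_three_or_four_general G S r hmax hr hr34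
end

section
/- Let m > 2 be even and n ≥ 1, and let G be a group of order 2mn generated by elements a and b satisfying a^m = 1, b^(2n) = 1, and b·a·b⁻¹ = a⁻¹ (the metacyclic group M_{2mn}). Then the characteristic polynomial of the adjacency matrix of the commuting graph Γ_G (over the reals) equals (X + 1)^(2mn − 2n − m/2 − 1) · (X − (2n − 1))^(m/2) · (X − (mn − 2n − 1)); in particular G is commuting integral. -/
open Polynomial

/-!
Every element of `G` is uniquely `a ^ i * b ^ j` with `i : ZMod m`, `j : ZMod (2 * n)`, and
`a ^ i * b ^ j * a ^ k * b ^ l = a ^ (i + (-1) ^ j * k) * b ^ (j + l)`. Hence the centre consists of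
the `a ^ i * b ^ j` with `j` even and `2 * i = 0`, and commuting is an equivalence relation on the
non-central elements: the non-central part of the abelian subgroup `⟨a, b ^ 2⟩` is one class, of
size `(m - 2) * n`, and the elements with `j` odd split into `m / 2` classes of size `2 * n`
according to `i` modulo `m / 2`. So the commuting graph is a disjoint union of cliques, and a
clique `K_s` contributes `(X + 1) ^ (s - 1) * (X - (s - 1))` to the characteristic polynomial.
-/

open Matrix in
theorem SimpleGraph.charpoly_adjMatrix_completeGraph (R : Type*) [CommRing R] (V : Type*)
    [Fintype V] [DecidableEq V] [Nonempty V] :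
    ((completeGraph V).adjMatrix R).charpoly =
      (X + 1) ^ (Fintype.card V - 1) * (X - C ((Fintype.card V : R) - 1)) := by
  have hJ : (of 1 : Matrix V V R) - 1 = vecMulVec 1 1 - scalar V 1 := by
    rw [(scalar V).map_one]; congr; ext; simp
  obtain ⟨k, hk⟩ : ∃ k, Fintype.card V = k + 1 :=
    ⟨_, (Nat.sub_add_cancel Fintype.card_pos).symm⟩
  rw [adjMatrix_completeGraph_eq_of_one_sub_one, hJ, charpoly_sub_scalar, charpoly_vecMulVec, hk]
  simp only [dotProduct, Pi.one_apply, mul_one, Finset.sum_const, Finset.card_univ, hk,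
    nsmul_eq_mul, smul_eq_C_mul, sub_comp, mul_comp, pow_comp, X_comp, natCast_comp, map_one,
    map_sub, map_natCast, Nat.add_sub_cancel]
  push_cast
  ring

open Matrix in
theorem SimpleGraph.charpoly_adjMatrix_eq_prod_of_adj_iff (R : Type*) [CommRing R]
    {V ι : Type*} [Fintype V] [DecidableEq V] [Fintype ι] [DecidableEq ι]
    (Γ : SimpleGraph V) [DecidableRel Γ.Adj] (cl : V → ι)
    (hadj : ∀ x y, Γ.Adj x y ↔ x ≠ y ∧ cl x = cl y) :
    (Γ.adjMatrix R).charpoly =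
      ∏ k, ((completeGraph {x // cl x = k}).adjMatrix R).charpoly := by
  -- the adjacency matrix is block diagonal, so block triangular for any linear order on `ι`
  let : LinearOrder ι := LinearOrder.lift' _ (Fintype.equivFin ι).injective
  have hbt : (Γ.adjMatrix R).BlockTriangular cl := fun x y hlt => by
    rw [adjMatrix_apply, if_neg fun h => hlt.ne' ((hadj x y).1 h).2]
  rw [charpoly, hbt.charmatrix.det_fintype]
  refine Finset.prod_congr rfl fun k _ => ?_
  rw [← charmatrix_toSquareBlock]
  congr 2
  ext x y
  simp only [toSquareBlock_def, of_apply, adjMatrix_apply, hadj]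
  simp [x.2, y.2, Subtype.ext_iff]

theorem SimpleGraph.charpoly_adjMatrix_eq_of_adj_iff_option (R : Type*) [CommRing R]
    {V ι : Type*} [Fintype V] [DecidableEq V] [Fintype ι] [DecidableEq ι]
    (Γ : SimpleGraph V) [DecidableRel Γ.Adj] (cl : V → Option ι)
    (hadj : ∀ x y, Γ.Adj x y ↔ x ≠ y ∧ cl x = cl y) {s t : ℕ} (hs : 0 < s) (ht : 0 < t)
    (hnone : Fintype.card {x // cl x = none} = s)
    (hsome : ∀ c, Fintype.card {x // cl x = some c} = t) :
    (Γ.adjMatrix R).charpoly = (X + 1) ^ (s - 1 + (t - 1) * Fintype.card ι) *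
      (X - C ((t : R) - 1)) ^ Fintype.card ι * (X - C ((s : R) - 1)) := by
  have : Nonempty {x // cl x = none} := Fintype.card_pos_iff.1 (hnone ▸ hs)
  have (c : ι) : Nonempty {x // cl x = some c} := Fintype.card_pos_iff.1 (hsome c ▸ ht)
  rw [charpoly_adjMatrix_eq_prod_of_adj_iff R Γ cl hadj, Fintype.prod_option]
  simp only [charpoly_adjMatrix_completeGraph, hnone, hsome, Finset.prod_const, Finset.card_univ]
  rw [mul_pow, ← pow_mul, pow_add]
  ring

theorem AddMonoidHom.card_fiber_mul_card_of_surjective {A B : Type*} [AddGroup A] [AddGroup B]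
    [Fintype A] [Fintype B] [DecidableEq B] (f : A →+ B) (hf : Function.Surjective f) (c : B) :
    Fintype.card {x // f x = c} * Fintype.card B = Fintype.card A := by
  have hfiber : ∀ c, Fintype.card {x // f x = c} = Fintype.card {x // f x = 0} := fun c => by
    obtain ⟨x₀, rfl⟩ := hf c
    exact Fintype.card_congr ((Equiv.subRight x₀).subtypeEquiv fun x => by simp [sub_eq_zero])
  rw [Fintype.card_congr (Equiv.sigmaFiberEquiv f).symm, Fintype.card_sigma]
  simp [hfiber, mul_comm]

namespace ZMod

theorem card_fiber_castHom {N d : ℕ} [NeZero N] [NeZero d] (hd : d ∣ N) (c : ZMod d) :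
    Fintype.card {x : ZMod N // castHom hd (ZMod d) x = c} = N / d := by
  have h := (castHom hd (ZMod d)).toAddMonoidHom.card_fiber_mul_card_of_surjective
    (castHom_surjective hd) c
  rw [card, card] at h
  exact (Nat.div_eq_of_eq_mul_left (Nat.pos_of_neZero d) h.symm).symm

theorem two_mul_eq_zero_iff_castHom_eq_zero {h : ℕ} [NeZero h] (x : ZMod (2 * h)) :
    2 * x = 0 ↔ castHom (dvd_mul_left h 2) (ZMod h) x = 0 := by
  rw [castHom_apply, cast_eq_val, natCast_eq_zero_iff, ← Nat.mul_dvd_mul_iff_left two_pos,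
    ← natCast_eq_zero_iff, Nat.cast_mul, natCast_val, cast_id', id, Nat.cast_ofNat]

theorem card_even_val (n : ℕ) [NeZero n] :
    Fintype.card {j : ZMod (2 * n) // Even j.val} = n := by
  refine (Fintype.card_congr <| Equiv.subtypeEquivRight fun j => ?_).trans
    ((card_fiber_castHom (dvd_mul_right 2 n) 0).trans (Nat.mul_div_cancel_left n two_pos))
  rw [castHom_apply, cast_eq_val, natCast_eq_zero_iff_even]

theorem card_odd_val (n : ℕ) [NeZero n] :
    Fintype.card {j : ZMod (2 * n) // Odd j.val} = n := by
  refine (Fintype.card_congr <| Equiv.subtypeEquivRight fun j => ?_).trans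
    ((card_fiber_castHom (dvd_mul_right 2 n) 1).trans (Nat.mul_div_cancel_left n two_pos))
  rw [castHom_apply, cast_eq_val, natCast_eq_one_iff_odd]

theorem card_two_mul_ne_zero (h : ℕ) [NeZero h] :
    Fintype.card {i : ZMod (2 * h) // 2 * i ≠ 0} = 2 * h - 2 := by
  have hker : Fintype.card {i : ZMod (2 * h) // 2 * i = 0} = 2 :=
    (Fintype.card_congr (Equiv.subtypeEquivRight two_mul_eq_zero_iff_castHom_eq_zero)).trans
      ((card_fiber_castHom _ 0).trans (Nat.mul_div_cancel _ (Nat.pos_of_neZero h)))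
  rw [Fintype.card_subtype_compl, hker, card]

end ZMod

section Metacyclic

variable {G : Type*} [Group G]

theorem pow_mul_zpow_of_mul_mul_inv_eq_inv {a b : G} (hrel : b * a * b⁻¹ = a⁻¹) (j : ℕ)
    (i : ℤ) :
    b ^ j * a ^ i = a ^ ((-1) ^ j * i) * b ^ j := by
  have hconj : ∀ k : ℤ, b * a ^ k = a ^ (-k) * b := fun k => by
    rw [zpow_neg, ← inv_zpow, ← hrel, conj_zpow]; group
  induction j with
  | zero => simp
  | succ j ih =>
    rw [pow_succ', mul_assoc, ih, ← mul_assoc, hconj, mul_assoc, pow_succ]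
    ring_nf

theorem pow_val_intCast {g : G} {N : ℕ} [NeZero N] (hg : g ^ N = 1) (k : ℤ) :
    g ^ (k : ZMod N).val = g ^ k := by
  rw [← zpow_natCast, ZMod.val_intCast, ← zpow_eq_zpow_emod' k hg]

structure MetacyclicRelations (a b : G) (m n : ℕ) : Prop where
  pow_left : a ^ m = 1
  pow_right : b ^ (2 * n) = 1
  conj : b * a * b⁻¹ = a⁻¹

def metacyclicParam (a b : G) {m n : ℕ} (p : ZMod m × ZMod (2 * n)) : G :=
  a ^ p.1.val * b ^ p.2.val

/-- The commuting classes of the non-central elements `a ^ i * b ^ j` when `m = 2 * h`: `none` is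
the abelian subgroup `⟨a, b ^ 2⟩`, and `some c` collects the `a ^ i * b ^ j` with `j` odd and
`i ≡ c [MOD h]`. -/
def metacyclicCommClass {h n : ℕ} (p : ZMod (2 * h) × ZMod (2 * n)) : Option (ZMod h) :=
  if Even p.2.val then none else some (ZMod.castHom (dvd_mul_left h 2) (ZMod h) p.1)

namespace MetacyclicRelations

variable {a b : G} {m n : ℕ}

theorem param_mul [NeZero m] [NeZero n] (hab : MetacyclicRelations a b m n)
    (p q : ZMod m × ZMod (2 * n)) :
    metacyclicParam a b p * metacyclicParam a b q =
      metacyclicParam a b (p.1 + (-1) ^ p.2.val * q.1, p.2 + q.2) := by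
  have h₁ : p.1 + (-1) ^ p.2.val * q.1 =
      ((p.1.val + (-1) ^ p.2.val * q.1.val : ℤ) : ZMod m) := by
    push_cast; simp
  have h₂ : p.2 + q.2 = ((p.2.val + q.2.val : ℤ) : ZMod (2 * n)) := by
    push_cast; simp
  calc a ^ p.1.val * b ^ p.2.val * (a ^ q.1.val * b ^ q.2.val)
      = a ^ p.1.val * (b ^ p.2.val * a ^ (q.1.val : ℤ)) * b ^ q.2.val := by group
    _ = a ^ p.1.val * a ^ ((-1) ^ p.2.val * (q.1.val : ℤ)) * (b ^ p.2.val * b ^ q.2.val) := by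
      rw [pow_mul_zpow_of_mul_mul_inv_eq_inv hab.conj]; group
    _ = _ := by
      rw [metacyclicParam, h₁, h₂, pow_val_intCast hab.pow_left, pow_val_intCast hab.pow_right,
        zpow_add, zpow_add]
      simp only [zpow_natCast]

theorem param_one_zero [NeZero m] (hab : MetacyclicRelations a b m n) :
    metacyclicParam a b ((1, 0) : ZMod m × ZMod (2 * n)) = a := by
  simpa [metacyclicParam] using pow_val_intCast hab.pow_left 1

theorem param_zero_one [NeZero n] (hab : MetacyclicRelations a b m n) :
    metacyclicParam a b ((0, 1) : ZMod m × ZMod (2 * n)) = b := by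
  simpa [metacyclicParam] using pow_val_intCast hab.pow_right 1

theorem param_surjective [NeZero m] [NeZero n] (hab : MetacyclicRelations a b m n)
    (hgen : Subgroup.closure ({a, b} : Set G) = ⊤) :
    Function.Surjective (metacyclicParam a b : ZMod m × ZMod (2 * n) → G) := by
  intro g
  induction (hgen ▸ Subgroup.mem_top g : g ∈ Subgroup.closure {a, b}) using
    Subgroup.closure_induction with
  | mem x hx =>
    rcases hx with rfl | rfl
    exacts [⟨_, hab.param_one_zero⟩, ⟨_, hab.param_zero_one⟩]
  | one => exact ⟨0, by simp [metacyclicParam]⟩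
  | mul x y _ _ hx hy =>
    obtain ⟨⟨p, rfl⟩, ⟨q, rfl⟩⟩ := And.intro hx hy
    exact ⟨_, (hab.param_mul p q).symm⟩
  | inv x _ hx =>
    obtain ⟨p, rfl⟩ := hx
    refine ⟨(-((-1) ^ p.2.val * p.1), -p.2), eq_inv_of_mul_eq_one_right ?_⟩
    rw [hab.param_mul]
    dsimp only
    rw [mul_neg, ← mul_assoc, ← pow_add, ← two_mul, pow_mul, neg_one_sq, one_pow,
      one_mul, add_neg_cancel, add_neg_cancel]
    simp [metacyclicParam]

theorem param_bijective [Fintype G] [NeZero m] [NeZero n] (hab : MetacyclicRelations a b m n)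
    (hgen : Subgroup.closure ({a, b} : Set G) = ⊤) (hcard : Nat.card G = 2 * m * n) :
    Function.Bijective (metacyclicParam a b : ZMod m × ZMod (2 * n) → G) := by
  rw [Fintype.bijective_iff_surjective_and_card]
  refine ⟨hab.param_surjective hgen, ?_⟩
  rw [Fintype.card_prod, ZMod.card, ZMod.card, ← Nat.card_eq_fintype_card, hcard]
  ring

theorem param_commute_iff [NeZero m] [NeZero n] (hab : MetacyclicRelations a b m n)
    (hinj : Function.Injective (metacyclicParam a b : ZMod m × ZMod (2 * n) → G))
    (p q : ZMod m × ZMod (2 * n)) :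
    Commute (metacyclicParam a b p) (metacyclicParam a b q) ↔
      p.1 + (-1) ^ p.2.val * q.1 = q.1 + (-1) ^ q.2.val * p.1 := by
  rw [Commute, SemiconjBy, hab.param_mul, hab.param_mul, hinj.eq_iff, Prod.ext_iff, add_comm q.2]
  exact and_iff_left rfl

theorem param_mem_center_iff [NeZero m] [NeZero n] (hab : MetacyclicRelations a b m n)
    (hm : 2 < m)
    (hbij : Function.Bijective (metacyclicParam a b : ZMod m × ZMod (2 * n) → G))
    (p : ZMod m × ZMod (2 * n)) :
    metacyclicParam a b p ∈ Subgroup.center G ↔ Even p.2.val ∧ 2 * p.1 = 0 := by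
  have h2 : (2 : ZMod m) ≠ 0 := by
    rw [← Nat.cast_ofNat, Ne, ZMod.natCast_eq_zero_iff]
    exact fun hdvd => absurd (Nat.le_of_dvd two_pos hdvd) (by omega)
  have hval : (1 : ZMod (2 * n)).val = 1 :=
    (ZMod.val_one_eq_one_mod _).trans (Nat.mod_eq_of_lt (by have := NeZero.ne n; omega))
  rw [Subgroup.mem_center_iff]
  change (∀ g : G, Commute g _) ↔ _
  simp only [hbij.2.forall, hab.param_commute_iff hbij.1]
  constructor
  · intro hcomm
    have hcomm_a := hcomm (1, 0)
    have hcomm_b := hcomm (0, 1)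
    simp only [ZMod.val_zero, pow_zero, one_mul, mul_one, hval, pow_one, mul_zero, add_zero,
      zero_add] at hcomm_a hcomm_b
    refine ⟨?_, by linear_combination -hcomm_b⟩
    rcases Nat.even_or_odd p.2.val with hp | hp
    · exact hp
    · rw [hp.neg_one_pow] at hcomm_a
      exact absurd (by linear_combination hcomm_a) h2
  · rintro ⟨hp, hp2⟩ q
    rcases Nat.even_or_odd q.2.val with hq | hq
    · simp only [hp.neg_one_pow, hq.neg_one_pow, one_mul, add_comm]
    · simp only [hp.neg_one_pow, hq.neg_one_pow]
      linear_combination -hp2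

theorem param_commute_iff_metacyclicCommClass_eq {h : ℕ} [NeZero h] [NeZero n]
    (hab : MetacyclicRelations a b (2 * h) n)
    (hinj : Function.Injective (metacyclicParam a b : ZMod (2 * h) × ZMod (2 * n) → G))
    {p q : ZMod (2 * h) × ZMod (2 * n)} (hp : ¬(Even p.2.val ∧ 2 * p.1 = 0))
    (hq : ¬(Even q.2.val ∧ 2 * q.1 = 0)) :
    Commute (metacyclicParam a b p) (metacyclicParam a b q) ↔
      metacyclicCommClass p = metacyclicCommClass q := by
  rw [hab.param_commute_iff hinj, metacyclicCommClass, metacyclicCommClass]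
  rcases Nat.even_or_odd p.2.val with hp₂ | hp₂ <;>
    rcases Nat.even_or_odd q.2.val with hq₂ | hq₂
  · simp [hp₂, hq₂, add_comm]
  · simp only [hp₂.neg_one_pow, hq₂.neg_one_pow, if_pos hp₂,
      if_neg (Nat.not_even_iff_odd.2 hq₂), reduceCtorEq, iff_false]
    exact fun hpq => hp ⟨hp₂, by linear_combination hpq⟩
  · simp only [hp₂.neg_one_pow, hq₂.neg_one_pow, if_pos hq₂,
      if_neg (Nat.not_even_iff_odd.2 hp₂), reduceCtorEq, iff_false]
    exact fun hpq => hq ⟨hq₂, by linear_combination -hpq⟩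
  · simp only [hp₂.neg_one_pow, hq₂.neg_one_pow, if_neg (Nat.not_even_iff_odd.2 hp₂),
      if_neg (Nat.not_even_iff_odd.2 hq₂), Option.some_inj]
    rw [← sub_eq_zero (b := ZMod.castHom _ _ q.1), ← map_sub,
      ← ZMod.two_mul_eq_zero_iff_castHom_eq_zero]
    constructor <;> intro hpq <;> linear_combination hpq

end MetacyclicRelations

end Metacyclic

theorem card_metacyclicCommClass_eq_none (h n : ℕ) [NeZero h] [NeZero n] :
    Fintype.card {p : ZMod (2 * h) × ZMod (2 * n) //
      ¬(Even p.2.val ∧ 2 * p.1 = 0) ∧ metacyclicCommClass p = none} = (2 * h - 2) * n := by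
  have hiff : ∀ p : ZMod (2 * h) × ZMod (2 * n),
      ¬(Even p.2.val ∧ 2 * p.1 = 0) ∧ metacyclicCommClass p = none ↔
        2 * p.1 ≠ 0 ∧ Even p.2.val := by
    intro p
    by_cases hp : Even p.2.val <;> simp [metacyclicCommClass, hp]
  rw [Fintype.card_congr ((Equiv.subtypeEquivRight hiff).trans
    (Equiv.subtypeProdEquivProd (p := fun i : ZMod (2 * h) => 2 * i ≠ 0)
      (q := fun j : ZMod (2 * n) => Even j.val))),
    Fintype.card_prod, ZMod.card_two_mul_ne_zero, ZMod.card_even_val]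

theorem card_metacyclicCommClass_eq_some {h n : ℕ} [NeZero h] [NeZero n] (c : ZMod h) :
    Fintype.card {p : ZMod (2 * h) × ZMod (2 * n) //
      ¬(Even p.2.val ∧ 2 * p.1 = 0) ∧ metacyclicCommClass p = some c} = 2 * n := by
  have hiff : ∀ p : ZMod (2 * h) × ZMod (2 * n),
      ¬(Even p.2.val ∧ 2 * p.1 = 0) ∧ metacyclicCommClass p = some c ↔
        ZMod.castHom (dvd_mul_left h 2) (ZMod h) p.1 = c ∧ Odd p.2.val := by
    intro p
    by_cases hp : Even p.2.val <;>
      simp [metacyclicCommClass, hp, and_comm, ← Nat.not_even_iff_odd]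
  rw [Fintype.card_congr ((Equiv.subtypeEquivRight hiff).trans
    (Equiv.subtypeProdEquivProd (p := fun i => ZMod.castHom (dvd_mul_left h 2) (ZMod h) i = c)
      (q := fun j : ZMod (2 * n) => Odd j.val))),
    Fintype.card_prod, ZMod.card_fiber_castHom, ZMod.card_odd_val,
    Nat.mul_div_cancel _ (Nat.pos_of_neZero h)]

theorem commCharpoly_eq_of_metacyclic {G : Type*} [Group G] [Fintype G] {a b : G} {h n : ℕ}
    [NeZero n] (hh : 1 < h) (hab : MetacyclicRelations a b (2 * h) n)
    (hbij : Function.Bijective (metacyclicParam a b : ZMod (2 * h) × ZMod (2 * n) → G)) :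
    commCharpoly G = (X + 1) ^ ((2 * h - 2) * n - 1 + (2 * n - 1) * h) *
      (X - C (((2 * n : ℕ) : ℝ) - 1)) ^ h * (X - C ((((2 * h - 2) * n : ℕ) : ℝ) - 1)) := by
  classical
  have : NeZero h := ⟨by omega⟩
  let e := Equiv.ofBijective _ hbij
  have hcenter (g : G) :
      g ∉ Subgroup.center G ↔ ¬(Even (e.symm g).2.val ∧ 2 * (e.symm g).1 = 0) := by
    rw [← hab.param_mem_center_iff (by omega) hbij, ← Equiv.ofBijective_apply _ hbij,
      e.apply_symm_apply]
  let cl : {g : G // g ∉ Subgroup.center G} → Option (ZMod h) :=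
    fun x => metacyclicCommClass (e.symm x)
  have hadj (x y) : (commutingGraph G).Adj x y ↔ x ≠ y ∧ cl x = cl y := by
    refine and_congr_right fun _ => ?_
    rw [← hab.param_commute_iff_metacyclicCommClass_eq hbij.1 ((hcenter x).1 x.2)
      ((hcenter y).1 y.2)]
    change Commute x.1 y.1 ↔ Commute (e (e.symm x)) (e (e.symm y))
    rw [e.apply_symm_apply, e.apply_symm_apply]
  have hfiber (k) : Fintype.card {x // cl x = k} = Fintype.card {p : ZMod (2 * h) × ZMod (2 * n) //
      ¬(Even p.2.val ∧ 2 * p.1 = 0) ∧ metacyclicCommClass p = k} :=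
    Fintype.card_congr <| (Equiv.subtypeSubtypeEquivSubtypeInter (· ∉ Subgroup.center G)
      (fun g => metacyclicCommClass (e.symm g) = k)).trans
      (e.symm.subtypeEquiv fun g => and_congr_left' (hcenter g))
  rw [commCharpoly, SimpleGraph.charpoly_adjMatrix_eq_of_adj_iff_option ℝ _ cl hadj
    (s := (2 * h - 2) * n) (t := 2 * n) (Nat.mul_pos (by omega) (Nat.pos_of_neZero n))
    (Nat.mul_pos two_pos (Nat.pos_of_neZero n))
    (by rw [hfiber, card_metacyclicCommClass_eq_none])
    (fun c => by rw [hfiber, card_metacyclicCommClass_eq_some]), ZMod.card]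

theorem commuting_integral_metacyclic_even
    (m n : ℕ) (hm : 2 < m) (hmeven : Even m) (hn : 1 ≤ n)
    (G : Type*) [Group G] [Fintype G] (a b : G)
    (hcard : Nat.card G = 2 * m * n)
    (ha : a ^ m = 1) (hb : b ^ (2 * n) = 1) (hrel : b * a * b⁻¹ = a⁻¹)
    (hgen : Subgroup.closure ({a, b} : Set G) = ⊤) :
    commCharpoly G =
        (X + 1) ^ (2 * m * n - 2 * n - m / 2 - 1) *
          (X - C (2 * (n : ℝ) - 1)) ^ (m / 2) *
          (X - C ((m : ℝ) * n - 2 * n - 1)) ∧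
      ∀ μ : ℝ, (commCharpoly G).IsRoot μ → ∃ k : ℤ, μ = (k : ℝ) := by
  obtain ⟨h, rfl⟩ := hmeven.two_dvd
  have : NeZero h := ⟨by omega⟩
  have : NeZero n := ⟨by omega⟩
  have hab : MetacyclicRelations a b (2 * h) n := ⟨ha, hb, hrel⟩
  have hchar := commCharpoly_eq_of_metacyclic (by omega) hab (hab.param_bijective hgen hcard)
  have hexp : 2 * (2 * h) * n - 2 * n - 2 * h / 2 - 1 = (2 * h - 2) * n - 1 + (2 * n - 1) * h := by
    obtain ⟨k, rfl⟩ : ∃ k, n = k + 1 := ⟨n - 1, by omega⟩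
    obtain ⟨l, rfl⟩ : ∃ l, h = l + 2 := ⟨h - 2, by omega⟩
    rw [show 2 * (l + 2) - 2 = 2 * (l + 1) by omega, show 2 * (k + 1) - 1 = 2 * k + 1 by omega]
    ring_nf
    omega
  have hpoly : commCharpoly G = (X + 1) ^ (2 * (2 * h) * n - 2 * n - 2 * h / 2 - 1) *
      (X - C (2 * (n : ℝ) - 1)) ^ (2 * h / 2) *
        (X - C (((2 * h : ℕ) : ℝ) * n - 2 * n - 1)) := by
    rw [hchar, hexp, Nat.mul_div_cancel_left h two_pos, Nat.cast_mul (2 * h - 2),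
      Nat.cast_sub (by omega)]
    push_cast
    ring_nf
  refine ⟨hpoly, fun μ hμ => ?_⟩
  simp only [hpoly, IsRoot, eval_mul, eval_pow, eval_add, eval_sub, eval_X, eval_C, eval_one,
    mul_eq_zero, pow_eq_zero_iff', sub_eq_zero, add_eq_zero_iff_eq_neg] at hμ
  rcases hμ with (⟨rfl, -⟩ | ⟨rfl, -⟩) | rfl
  exacts [⟨-1, by simp⟩, ⟨2 * n - 1, by push_cast; ring⟩,
    ⟨2 * h * n - 2 * n - 1, by push_cast; ring⟩]
end

section
/- Let m > 2 be even and let G = D_{2m} be the dihedral group of order 2m (Mathlib's DihedralGroup m). Then the characteristic polynomial of the adjacency matrix of the commuting graph Γ_G (over the reals) equals (X + 1)^(3m/2 − 3) · (X − 1)^(m/2) · (X − (m − 3)); in particular G is commuting integral. -/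
open Polynomial

/-!
For `m = 2n`, commuting is an equivalence relation on the non-central elements of `D_{2m}`: its
classes are the `2n - 2` non-central rotations and the `n` pairs of reflections `sr i`, `sr (i + n)`
(two reflections `sr i`, `sr j` commute iff `2 i = 2 j`). So the commuting graph is the disjoint
union of `K_{2n-2}` and `n` copies of `K_2`, its adjacency matrix is block diagonal, and `K_c` has
adjacency matrix `J - I` with `J = 1 1ᵀ` of characteristic polynomial `X^(c-1) (X - c)`, which
shifts to `(X + 1)^(c - 1) (X - (c - 1))`.
-/

open Matrix Finset

namespace SimpleGraph

variable {V R : Type*} [Fintype V] [DecidableEq V] [CommRing R]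

theorem charpoly_adjMatrix_completeGraph_s15 [Nonempty V] :
    ((completeGraph V).adjMatrix R).charpoly =
      (X + 1) ^ (Fintype.card V - 1) * (X - C ((Fintype.card V : R) - 1)) := by
  obtain ⟨k, hk⟩ : ∃ k, Fintype.card V = k + 1 := Nat.exists_eq_add_one.mpr Fintype.card_pos
  have hJ : (of 1 : Matrix V V R) - 1 = vecMulVec 1 1 - scalar V 1 := by ext; simp [vecMulVec]
  rw [adjMatrix_completeGraph_eq_of_one_sub_one, hJ, charpoly_sub_scalar, charpoly_vecMulVec]
  simp only [one_dotProduct_one, smul_eq_C_mul, map_natCast, map_one, sub_comp, pow_comp, X_comp,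
    mul_comp, natCast_comp, map_sub]
  push_cast [hk]
  ring

theorem charpoly_adjMatrix_of_adj_iff_ne_and_eq {α : Type*} [LinearOrder α]
    (G : SimpleGraph V) [DecidableRel G.Adj] (f : V → α)
    (hG : ∀ x y, G.Adj x y ↔ x ≠ y ∧ f x = f y) :
    (G.adjMatrix R).charpoly = ∏ a ∈ univ.image f,
      (X + 1) ^ (Fintype.card {v // f v = a} - 1) *
        (X - C ((Fintype.card {v // f v = a} : R) - 1)) := by
  have hblock : (G.adjMatrix R).BlockTriangular f := fun x y hxy => by simp [hG, hxy.ne']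
  rw [hblock.charpoly]
  refine prod_congr rfl fun a ha => ?_
  obtain ⟨v, -, rfl⟩ := mem_image.mp ha
  have : Nonempty {w // f w = f v} := ⟨⟨v, rfl⟩⟩
  rw [← charpoly_adjMatrix_completeGraph_s15]
  congr 1
  ext x y
  simp [toSquareBlock_def, hG, x.2, y.2, Subtype.ext_iff]

end SimpleGraph

namespace ZMod

variable {n : ℕ} [NeZero n]

theorem two_mul_eq_two_mul_iff (i j : ZMod (2 * n)) : 2 * i = 2 * j ↔ i.val % n = j.val % n := by
  conv_lhs => rw [← natCast_zmod_val i, ← natCast_zmod_val j]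
  norm_cast
  rw [natCast_eq_natCast_iff', Nat.mul_mod_mul_left, Nat.mul_mod_mul_left]
  omega

theorem card_filter_val_mod_eq {a : ℕ} (ha : a < n) :
    #{i : ZMod (2 * n) | i.val % n = a} = 2 := by
  have hval : ∀ k < 2 * n, ∀ i : ZMod (2 * n), i = k ↔ i.val = k := fun k hk i => by
    rw [← (val_injective _).eq_iff, val_natCast_of_lt hk]
  have hfilter : ({i : ZMod (2 * n) | i.val % n = a} : Finset _) =
      {(a : ZMod (2 * n)), ((a + n : ℕ) : ZMod (2 * n))} := by
    ext i
    have := Nat.mod_add_div i.val n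
    have := Nat.mod_lt i.val (NeZero.pos n)
    have : i.val / n < 2 := Nat.div_lt_of_lt_mul (by linarith [i.val_lt])
    simp only [mem_filter, mem_univ, true_and, mem_insert, mem_singleton, hval a (by omega),
      hval (a + n) (by omega)]
    interval_cases i.val / n <;> omega
  rw [hfilter, card_pair]
  intro h
  have := congrArg val h
  rw [val_natCast_of_lt (by omega), val_natCast_of_lt (by omega)] at this
  omega

end ZMod

namespace DihedralGroup

section

variable {n : ℕ}

theorem commute_r_r (i j : ZMod n) : Commute (r i) (r j) := by
  simp [Commute, SemiconjBy, add_comm]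

theorem commute_r_sr_iff (i j : ZMod n) : Commute (r i) (sr j) ↔ 2 * i = 0 := by
  simp only [Commute, SemiconjBy, r_mul_sr, sr_mul_r, sr.injEq]
  constructor <;> intro h <;> linear_combination -h

theorem commute_sr_sr_iff (i j : ZMod n) : Commute (sr i) (sr j) ↔ 2 * i = 2 * j := by
  simp only [Commute, SemiconjBy, sr_mul_sr, r.injEq]
  constructor <;> intro h <;> linear_combination -h

theorem r_mem_center_iff (i : ZMod n) : r i ∈ Subgroup.center (DihedralGroup n) ↔ 2 * i = 0 := by
  rw [Subgroup.mem_center_iff]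
  refine ⟨fun h => (commute_r_sr_iff i 0).mp (h (sr 0)).symm, fun h => ?_⟩
  rintro (j | j)
  · exact (commute_r_r i j).symm.eq
  · exact ((commute_r_sr_iff i j).mpr h).symm.eq

theorem sr_notMem_center (hn : 2 < n) (i : ZMod n) : sr i ∉ Subgroup.center (DihedralGroup n) := by
  intro h
  have h2 : (2 : ZMod n) = 0 := by
    simpa using (commute_r_sr_iff 1 i).mp (Subgroup.mem_center_iff.mp h (r 1))
  have : Fact (1 < n) := ⟨by omega⟩
  simpa [ZMod.val_ofNat, Nat.mod_eq_of_lt hn] using congrArg ZMod.val h2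

end

def commClassIndex (n : ℕ) : DihedralGroup (2 * n) → ℕ
  | r _ => n
  | sr i => i.val % n

variable {n : ℕ} [NeZero n]

theorem commClassIndex_le (x : DihedralGroup (2 * n)) : commClassIndex n x ≤ n := by
  cases x
  · exact le_rfl
  · exact (Nat.mod_lt _ (NeZero.pos n)).le

theorem r_mem_center_iff_val_mod (i : ZMod (2 * n)) :
    r i ∈ Subgroup.center (DihedralGroup (2 * n)) ↔ i.val % n = 0 := by
  simpa [r_mem_center_iff] using ZMod.two_mul_eq_two_mul_iff i 0

theorem commute_iff_commClassIndex_eq {x y : DihedralGroup (2 * n)}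
    (hx : x ∉ Subgroup.center _) (hy : y ∉ Subgroup.center _) :
    Commute x y ↔ commClassIndex n x = commClassIndex n y := by
  have hlt : ∀ i : ZMod (2 * n), i.val % n < n := fun i => Nat.mod_lt _ (NeZero.pos n)
  rcases x with i | i <;> rcases y with j | j
  · exact iff_of_true (commute_r_r i j) rfl
  · rw [commute_r_sr_iff, ← r_mem_center_iff]
    exact iff_of_false hx (hlt j).ne'
  · rw [Commute.symm_iff, commute_r_sr_iff, ← r_mem_center_iff]
    exact iff_of_false hy (hlt i).ne
  · exact (commute_sr_sr_iff i j).trans (ZMod.two_mul_eq_two_mul_iff i j)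

theorem card_commClass_of_lt (hn : 2 ≤ n) {a : ℕ} (ha : a < n) :
    #{x : DihedralGroup (2 * n) | x ∉ Subgroup.center _ ∧ commClassIndex n x = a} = 2 := by
  have : ({x | x ∉ Subgroup.center _ ∧ commClassIndex n x = a} : Finset (DihedralGroup (2 * n))) =
      image sr {i : ZMod (2 * n) | i.val % n = a} := by
    ext (i | i) <;> rw [mem_filter] <;> simp [commClassIndex, sr_notMem_center (show 2 < 2 * n by omega), ha.ne']
  rw [this, card_image_of_injective _ fun _ _ => sr.inj, ZMod.card_filter_val_mod_eq ha]

theorem card_commClass_self :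
    #{x : DihedralGroup (2 * n) | x ∉ Subgroup.center _ ∧ commClassIndex n x = n} = 2 * n - 2 := by
  have hne : ∀ i : ZMod (2 * n), i.val % n ≠ n := fun i => (Nat.mod_lt _ (NeZero.pos n)).ne
  have : ({x | x ∉ Subgroup.center _ ∧ commClassIndex n x = n} : Finset (DihedralGroup (2 * n))) =
      image r {i : ZMod (2 * n) | ¬ i.val % n = 0} := by
    ext (i | i) <;> rw [mem_filter] <;> simp [commClassIndex, r_mem_center_iff_val_mod, hne]
  rw [this, card_image_of_injective _ fun _ _ => r.inj, filter_not,
    card_sdiff_of_subset (filter_subset _ _), ZMod.card_filter_val_mod_eq (NeZero.pos n),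
    card_univ, ZMod.card]

end DihedralGroup

open DihedralGroup in
theorem commCharpoly_dihedralGroup_two_mul {n : ℕ} [NeZero n] (hn : 2 ≤ n) :
    commCharpoly (DihedralGroup (2 * n)) =
      (X + 1) ^ (3 * n - 3) * (X - 1) ^ n * (X - C (2 * n - 3 : ℝ)) := by
  classical
  let f : {x : DihedralGroup (2 * n) // x ∉ Subgroup.center _} → ℕ := fun v => commClassIndex n v
  have hcard : ∀ a, Fintype.card {v // f v = a} =
      #{x : DihedralGroup (2 * n) | x ∉ Subgroup.center _ ∧ commClassIndex n x = a} := fun a => by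
    rw [Fintype.card_congr (Equiv.subtypeSubtypeEquivSubtypeInter (· ∉ Subgroup.center _)
      (commClassIndex n · = a)), Fintype.card_subtype]
  have himage : univ.image f = range (n + 1) := by
    ext a
    rw [mem_image, mem_range, Nat.lt_succ_iff]
    refine ⟨fun ⟨v, _, hv⟩ => hv ▸ commClassIndex_le _, fun ha => ?_⟩
    obtain ⟨⟨v, hv⟩⟩ : Nonempty {v // f v = a} := by
      rw [← Fintype.card_pos_iff, hcard]
      rcases ha.lt_or_eq with ha | rfl
      · rw [card_commClass_of_lt hn ha]; omega
      · rw [card_commClass_self]; omega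
    exact ⟨v, mem_univ _, hv⟩
  unfold commCharpoly
  -- `commCharpoly` is built from classical decidability instances, hence `convert`.
  convert (commutingGraph _).charpoly_adjMatrix_of_adj_iff_ne_and_eq f
      fun x y => and_congr_right fun _ => commute_iff_commClassIndex_eq x.2 y.2 using 1
  · congr!
  rw [himage, prod_range_succ, hcard, card_commClass_self,
    prod_congr rfl fun a ha => by rw [hcard, card_commClass_of_lt hn (mem_range.mp ha)],
    prod_const, card_range, show 3 * n - 3 = (2 * n - 2 - 1) + n by omega, pow_add, mul_pow,
    show ((2 * n - 2 : ℕ) : ℝ) - 1 = 2 * n - 3 by rw [Nat.cast_sub (by omega)]; push_cast; ring,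
    show ((2 : ℕ) : ℝ) - 1 = 1 by norm_num, C_1, pow_one]
  ring

theorem exists_int_eq_of_isRoot_pow_mul_pow_mul_X_sub_C {a b : ℕ} {k : ℤ} {μ : ℝ}
    (h : ((X + 1) ^ a * (X - 1) ^ b * (X - C (k : ℝ))).IsRoot μ) : ∃ j : ℤ, μ = j := by
  simp only [IsRoot, eval_mul, eval_pow, eval_add, eval_sub, eval_X, eval_one, eval_C, mul_eq_zero,
    pow_eq_zero_iff', sub_eq_zero] at h
  rcases h with (⟨h, -⟩ | ⟨h, -⟩) | h
  · exact ⟨-1, by push_cast; linarith⟩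
  · exact ⟨1, by exact_mod_cast h⟩
  · exact ⟨k, h⟩

theorem commuting_integral_dihedral_even
    (m : ℕ) [NeZero m] (hm : 2 < m) (hmeven : Even m) :
    commCharpoly (DihedralGroup m) =
        (X + 1) ^ (3 * m / 2 - 3) * (X - 1) ^ (m / 2) * (X - C ((m : ℝ) - 3)) ∧
      ∀ μ : ℝ, (commCharpoly (DihedralGroup m)).IsRoot μ → ∃ k : ℤ, μ = (k : ℝ) := by
  obtain ⟨n, rfl⟩ := even_iff_two_dvd.mp hmeven
  have : NeZero n := ⟨by omega⟩
  have hpoly : commCharpoly (DihedralGroup (2 * n)) =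
      (X + 1) ^ (3 * (2 * n) / 2 - 3) * (X - 1) ^ (2 * n / 2) * (X - C (((2 * n : ℕ) : ℝ) - 3)) := by
    rw [commCharpoly_dihedralGroup_two_mul (by omega), show 3 * (2 * n) / 2 = 3 * n by omega,
      show 2 * n / 2 = n by omega]
    push_cast
    rfl
  refine ⟨hpoly, fun μ hμ => ?_⟩
  rw [hpoly, show ((2 * n : ℕ) : ℝ) - 3 = ((2 * n - 3 : ℤ) : ℝ) by push_cast; ring] at hμ
  exact exists_int_eq_of_isRoot_pow_mul_pow_mul_X_sub_C hμ
end
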